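/- Let D⋆ be a global minimizer of J̃ over K and set H⋆ = C − (1/2)[[A,D⋆],A]. Then for every D ∈ K one has Tr(H⋆ D) ≥ Tr(H⋆ D⋆); i.e. D⋆ also minimizes the linear functional D ↦ Tr(H⋆ D) over K, and hence Tr(H⋆ D⋆) = μ₁ + ⋯ + μ_m where μ₁ ≤ ⋯ ≤ μ_M are the eigenvalues of H⋆. -/

import Mathlib

open Matrix Filter Topology

noncomputable section

/-- Commutator of matrices. -/
def commut {M : ℕ} (X Y : Matrix (Fin M) (Fin M) ℝ) : Matrix (Fin M) (Fin M) ℝ :=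
  X * Y - Y * X

/-- `K = CH(Gr(m,ℝ^M))`: symmetric `D` with `0 ⪯ D ⪯ I` and `Tr D = m`. -/
def Kset (M m : ℕ) (D : Matrix (Fin M) (Fin M) ℝ) : Prop :=
  D.PosSemidef ∧ (1 - D).PosSemidef ∧ D.trace = (m : ℝ)

/-- Squared Frobenius norm `‖X‖² = Tr(Xᵀ X)`. -/
def fnormSq {M : ℕ} (X : Matrix (Fin M) (Fin M) ℝ) : ℝ := (Xᵀ * X).trace

/-- The convexified functional `J̃(D) = Tr(CD) + (1/4)‖[A,D]‖²` with `C = B − (1/2)A²`. -/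
def Jt {M : ℕ} (A B D : Matrix (Fin M) (Fin M) ℝ) : ℝ :=
  ((B - (1 / 2 : ℝ) • (A * A)) * D).trace + (1 / 4) * fnormSq (commut A D)

/-- `μ` is the non-decreasing enumeration of the eigenvalues of `S`, with multiplicity. -/
def sortedEigs {M : ℕ} (S : Matrix (Fin M) (Fin M) ℝ) (μ : Fin M → ℝ) : Prop :=
  Monotone μ ∧ ∃ U : Matrix (Fin M) (Fin M) ℝ, U * Uᵀ = 1 ∧ S = U * Matrix.diagonal μ * Uᵀ

/-! `H⋆` is the gradient of `J̃` at `D⋆` for the trace pairing, and `J̃` is quadratic along every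
segment of the convex set `K`, so minimality of `D⋆` gives `Tr(H⋆ (D − D⋆)) ≥ 0` on `K`.
Writing `H⋆ = U diag(μ) Uᵀ`, the diagonal of `Uᵀ D U` is, for any `D ∈ K`, a weight vector in
`[0,1]^M` of total mass `m`; thresholding at `μ_{m+1}` shows these weights are best put on the
`m` smallest eigenvalues, which is achieved by `U diag(1,…,1,0,…,0) Uᵀ ∈ K`. -/

section Expansion

variable {M : ℕ}

def gradJt (A B D : Matrix (Fin M) (Fin M) ℝ) : Matrix (Fin M) (Fin M) ℝ :=
  (B - (1 / 2 : ℝ) • (A * A)) - (1 / 2 : ℝ) • commut (commut A D) A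

lemma fnormSq_add_smul (X Y : Matrix (Fin M) (Fin M) ℝ) (t : ℝ) :
    fnormSq (X + t • Y) = fnormSq X + 2 * t * (Xᵀ * Y).trace + t ^ 2 * fnormSq Y := by
  have hsymm : (Yᵀ * X).trace = (Xᵀ * Y).trace := by
    rw [← trace_transpose, transpose_mul, transpose_transpose]
  simp only [fnormSq, transpose_add, transpose_smul, add_mul, mul_add, smul_mul_assoc,
    mul_smul_comm, trace_add, trace_smul, hsymm, smul_eq_mul]
  ring

lemma commut_add_smul (A D E : Matrix (Fin M) (Fin M) ℝ) (t : ℝ) :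
    commut A (D + t • E) = commut A D + t • commut A E := by
  simp only [commut, mul_add, add_mul, mul_smul_comm, smul_mul_assoc, smul_sub]
  abel

lemma trace_transpose_commut_mul_commut {A D : Matrix (Fin M) (Fin M) ℝ} (hA : A.IsSymm)
    (hD : D.IsSymm) (E : Matrix (Fin M) (Fin M) ℝ) :
    ((commut A D)ᵀ * commut A E).trace = -(commut (commut A D) A * E).trace := by
  have hanti : (commut A D)ᵀ = -commut A D := by
    simp only [commut, transpose_sub, transpose_mul, hA.eq, hD.eq, neg_sub]
  rw [hanti]
  generalize commut A D = X
  simp only [commut, mul_sub, sub_mul, neg_mul, trace_sub, trace_neg, Matrix.mul_assoc]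
  rw [trace_mul_cycle' X E A]
  ring

lemma jt_add_smul {A D : Matrix (Fin M) (Fin M) ℝ} (B : Matrix (Fin M) (Fin M) ℝ)
    (hA : A.IsSymm) (hD : D.IsSymm) (E : Matrix (Fin M) (Fin M) ℝ) (t : ℝ) :
    Jt A B (D + t • E) =
      Jt A B D + t * (gradJt A B D * E).trace + t ^ 2 * (fnormSq (commut A E) / 4) := by
  simp only [Jt, gradJt, commut_add_smul, fnormSq_add_smul,
    trace_transpose_commut_mul_commut hA hD, mul_add, mul_smul_comm, sub_mul, smul_mul_assoc,
    trace_add, trace_sub, trace_smul, smul_eq_mul]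
  ring

end Expansion

section FirstOrder

variable {M m : ℕ}

lemma nonneg_of_forall_mul_add_sq_mul_nonneg {L Q : ℝ}
    (h : ∀ t ∈ Set.Ioo (0 : ℝ) 1, 0 ≤ t * L + t ^ 2 * Q) : 0 ≤ L := by
  have hlim : Tendsto (fun t : ℝ => L + t * Q) (𝓝[>] 0) (𝓝 L) := by
    have hcont : Continuous fun t : ℝ => L + t * Q := by fun_prop
    exact (hcont.tendsto' 0 L (by simp)).mono_left nhdsWithin_le_nhds
  refine ge_of_tendsto hlim ?_
  filter_upwards [Ioo_mem_nhdsGT (zero_lt_one' ℝ)] with t ht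
  have := h t ht
  rw [show t * L + t ^ 2 * Q = t * (L + t * Q) by ring] at this
  exact nonneg_of_mul_nonneg_right this ht.1

lemma Kset.isSymm {D : Matrix (Fin M) (Fin M) ℝ} (hD : Kset M m D) : D.IsSymm :=
  isHermitian_iff_isSymm.mp hD.1.isHermitian

lemma convex_kset : Convex ℝ {D : Matrix (Fin M) (Fin M) ℝ | Kset M m D} := by
  intro D hD E hE a b ha hb hab
  refine ⟨(hD.1.smul ha).add (hE.1.smul hb), ?_, ?_⟩
  · have hsplit : 1 - (a • D + b • E) = a • (1 - D) + b • (1 - E) := by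
      calc 1 - (a • D + b • E) = (a + b) • (1 : Matrix (Fin M) (Fin M) ℝ) - (a • D + b • E) := by
            rw [hab, one_smul]
        _ = a • (1 - D) + b • (1 - E) := by module
    rw [hsplit]
    exact (hD.2.1.smul ha).add (hE.2.1.smul hb)
  · simp only [trace_add, trace_smul, hD.2.2, hE.2.2, smul_eq_mul, ← add_mul, hab, one_mul]

theorem trace_gradJt_mul_le_of_minimizer {A B Dstar : Matrix (Fin M) (Fin M) ℝ}
    (hA : A.IsSymm) (hDstar : Kset M m Dstar)
    (hmin : ∀ D : Matrix (Fin M) (Fin M) ℝ, Kset M m D → Jt A B Dstar ≤ Jt A B D)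
    {D : Matrix (Fin M) (Fin M) ℝ} (hD : Kset M m D) :
    (gradJt A B Dstar * Dstar).trace ≤ (gradJt A B Dstar * D).trace := by
  have hdir : 0 ≤ (gradJt A B Dstar * (D - Dstar)).trace := by
    refine nonneg_of_forall_mul_add_sq_mul_nonneg (Q := fnormSq (commut A (D - Dstar)) / 4)
      fun t ht => ?_
    have hmem := convex_kset.add_smul_sub_mem hDstar hD ⟨ht.1.le, ht.2.le⟩
    have := hmin _ hmem
    rw [jt_add_smul B hA hDstar.isSymm] at this
    linarith
  rwa [mul_sub, trace_sub, sub_nonneg] at hdir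

end FirstOrder

section KyFan

variable {M m : ℕ}

def lowerIndicator (M m : ℕ) : Fin M → ℝ := fun k => if (k : ℕ) < m then 1 else 0

lemma sum_lowerIndicator (hm : m ≤ M) : ∑ k, lowerIndicator M m k = m := by
  simp only [lowerIndicator, Finset.sum_boole, Fin.card_filter_val_lt, min_eq_right hm]

lemma sum_mul_lowerIndicator (μ : Fin M → ℝ) :
    ∑ k, μ k * lowerIndicator M m k =
      ∑ k ∈ Finset.univ.filter (fun k : Fin M => (k : ℕ) < m), μ k := by
  simp only [lowerIndicator, mul_ite, mul_one, mul_zero, Finset.sum_filter]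

lemma kset_diagonal_lowerIndicator (hm : m ≤ M) : Kset M m (diagonal (lowerIndicator M m)) := by
  refine ⟨?_, ?_, ?_⟩
  · refine posSemidef_diagonal_iff.mpr fun k => ?_
    unfold lowerIndicator; split_ifs <;> norm_num
  · rw [← diagonal_one, diagonal_sub]
    refine posSemidef_diagonal_iff.mpr fun k => ?_
    unfold lowerIndicator; split_ifs <;> norm_num
  · rw [trace_diagonal, sum_lowerIndicator hm]

lemma Kset.transpose_mul_mul {D : Matrix (Fin M) (Fin M) ℝ} (hD : Kset M m D)
    {V : Matrix (Fin M) (Fin M) ℝ} (hV : Vᵀ * V = 1) : Kset M m (Vᵀ * D * V) := by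
  have hcompl : 1 - Vᵀ * D * V = Vᵀ * (1 - D) * V := by
    rw [mul_sub, sub_mul, Matrix.mul_one, hV]
  refine ⟨?_, ?_, ?_⟩
  · simpa using hD.1.conjTranspose_mul_mul_same V
  · simpa [hcompl] using hD.2.1.conjTranspose_mul_mul_same V
  · rw [trace_mul_cycle, mul_eq_one_comm.mp hV, Matrix.one_mul, hD.2.2]

lemma Kset.diag_le_one {D : Matrix (Fin M) (Fin M) ℝ} (hD : Kset M m D) (k : Fin M) :
    D k k ≤ 1 := by
  have := hD.2.1.diag_nonneg (i := k)
  rwa [Matrix.sub_apply, one_apply_eq, sub_nonneg] at this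

lemma Monotone.sum_filter_lt_le_sum_mul (hm : m < M) {μ w : Fin M → ℝ} (hμ : Monotone μ)
    (hw₀ : ∀ k, 0 ≤ w k) (hw₁ : ∀ k, w k ≤ 1) (hw : ∑ k, w k = m) :
    ∑ k ∈ Finset.univ.filter (fun k : Fin M => (k : ℕ) < m), μ k ≤ ∑ k, μ k * w k := by
  set c := μ ⟨m, hm⟩
  have hterm : ∀ k, 0 ≤ (μ k - c) * (w k - lowerIndicator M m k) := by
    intro k
    unfold lowerIndicator
    split_ifs with hk
    · exact mul_nonneg_of_nonpos_of_nonpos (sub_nonpos.mpr (hμ (Fin.le_def.mpr hk.le)))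
        (sub_nonpos.mpr (hw₁ k))
    · simpa using mul_nonneg (sub_nonneg.mpr (hμ (Fin.le_def.mpr (not_lt.mp hk)))) (hw₀ k)
  have hzero : ∑ k, c * (w k - lowerIndicator M m k) = 0 := by
    rw [← Finset.mul_sum, Finset.sum_sub_distrib, hw, sum_lowerIndicator hm.le, sub_self,
      mul_zero]
  have hsplit : ∑ k, μ k * w k - ∑ k, μ k * lowerIndicator M m k =
      ∑ k, (μ k - c) * (w k - lowerIndicator M m k) + ∑ k, c * (w k - lowerIndicator M m k) := by
    rw [← Finset.sum_sub_distrib, ← Finset.sum_add_distrib]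
    exact Finset.sum_congr rfl fun k _ => by ring
  rw [← sum_mul_lowerIndicator, ← sub_nonneg, hsplit, hzero, add_zero]
  exact Finset.sum_nonneg fun k _ => hterm k

lemma trace_conj_diagonal_mul (U D : Matrix (Fin M) (Fin M) ℝ) (μ : Fin M → ℝ) :
    (U * diagonal μ * Uᵀ * D).trace = ∑ k, μ k * (Uᵀ * D * U) k k := by
  simp only [Matrix.mul_assoc]
  rw [trace_mul_comm U]
  simp only [Matrix.mul_assoc, trace, diag_apply, diagonal_mul]

theorem sum_filter_lt_le_trace_mul (hm : m < M) {μ : Fin M → ℝ} (hμ : Monotone μ)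
    {U D : Matrix (Fin M) (Fin M) ℝ} (hU : U * Uᵀ = 1) (hD : Kset M m D) :
    ∑ k ∈ Finset.univ.filter (fun k : Fin M => (k : ℕ) < m), μ k ≤
      (U * diagonal μ * Uᵀ * D).trace := by
  have hconj := hD.transpose_mul_mul (mul_eq_one_comm.mp hU)
  rw [trace_conj_diagonal_mul]
  refine hμ.sum_filter_lt_le_sum_mul hm (fun k => hconj.1.diag_nonneg) hconj.diag_le_one ?_
  simpa [trace] using hconj.2.2

theorem trace_mul_conj_diagonal_lowerIndicator {U : Matrix (Fin M) (Fin M) ℝ} (hU : Uᵀ * U = 1)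
    (μ : Fin M → ℝ) :
    (U * diagonal μ * Uᵀ * (U * diagonal (lowerIndicator M m) * Uᵀ)).trace =
      ∑ k ∈ Finset.univ.filter (fun k : Fin M => (k : ℕ) < m), μ k := by
  have hconj :
      Uᵀ * (U * diagonal (lowerIndicator M m) * Uᵀ) * U = diagonal (lowerIndicator M m) := by
    simp only [← Matrix.mul_assoc, hU, Matrix.one_mul]
    rw [Matrix.mul_assoc, hU, Matrix.mul_one]
  rw [trace_conj_diagonal_mul, hconj, ← sum_mul_lowerIndicator]
  simp only [diagonal_apply_eq]

end KyFan

theorem stmt_6_general {M m : ℕ} (hM : 2 ≤ M) (hm2 : m ≤ M - 1)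
    (A B : Matrix (Fin M) (Fin M) ℝ) (hA : A.IsSymm)
    (Dstar : Matrix (Fin M) (Fin M) ℝ) (hDstar : Kset M m Dstar)
    (hmin : ∀ D : Matrix (Fin M) (Fin M) ℝ, Kset M m D → Jt A B Dstar ≤ Jt A B D)
    (Hstar : Matrix (Fin M) (Fin M) ℝ)
    (hH : Hstar = (B - (1 / 2 : ℝ) • (A * A)) - (1 / 2 : ℝ) • commut (commut A Dstar) A) :
    (∀ D : Matrix (Fin M) (Fin M) ℝ, Kset M m D →
        (Hstar * Dstar).trace ≤ (Hstar * D).trace) ∧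
      ∀ μ : Fin M → ℝ, sortedEigs Hstar μ →
        (Hstar * Dstar).trace =
          ∑ k ∈ Finset.univ.filter (fun k : Fin M => (k : ℕ) < m), μ k := by
  obtain rfl : Hstar = gradJt A B Dstar := hH
  have hfirst := fun D (hD : Kset M m D) => trace_gradJt_mul_le_of_minimizer hA hDstar hmin hD
  refine ⟨hfirst, ?_⟩
  rintro μ ⟨hμ, U, hU, hdiag⟩
  have hm : m < M := by omega
  have hUU : Uᵀ * U = 1 := mul_eq_one_comm.mp hU
  have hD₀ : Kset M m (U * diagonal (lowerIndicator M m) * Uᵀ) := by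
    simpa using (kset_diagonal_lowerIndicator hm.le).transpose_mul_mul (V := Uᵀ) (by simpa using hU)
  rw [hdiag] at hfirst ⊢
  refine le_antisymm ?_ (sum_filter_lt_le_trace_mul hm hμ hU hDstar)
  exact (hfirst _ hD₀).trans_eq (trace_mul_conj_diagonal_lowerIndicator hUU μ)

/-- if `D⋆` is a global minimizer of `J̃` over `K` and
`H⋆ = C − (1/2)[[A,D⋆],A]`, then `Tr(H⋆ D) ≥ Tr(H⋆ D⋆)` for every `D ∈ K`, and
`Tr(H⋆ D⋆) = μ₁ + ⋯ + μ_m` for the eigenvalues `μ₁ ≤ ⋯ ≤ μ_M` of `H⋆`. -/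
theorem stmt_6 {M m : ℕ} (hM : 2 ≤ M) (hm1 : 1 ≤ m) (hm2 : m ≤ M - 1)
    (A B : Matrix (Fin M) (Fin M) ℝ) (hA : A.IsSymm) (hApsd : A.PosSemidef)
    (hB : B.IsSymm) (Dstar : Matrix (Fin M) (Fin M) ℝ) (hDstar : Kset M m Dstar)
    (hmin : ∀ D : Matrix (Fin M) (Fin M) ℝ, Kset M m D → Jt A B Dstar ≤ Jt A B D)
    (Hstar : Matrix (Fin M) (Fin M) ℝ)
    (hH : Hstar = (B - (1 / 2 : ℝ) • (A * A)) - (1 / 2 : ℝ) • commut (commut A Dstar) A) :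
    (∀ D : Matrix (Fin M) (Fin M) ℝ, Kset M m D →
        (Hstar * Dstar).trace ≤ (Hstar * D).trace) ∧
      ∀ μ : Fin M → ℝ, sortedEigs Hstar μ →
        (Hstar * Dstar).trace =
          ∑ k ∈ Finset.univ.filter (fun k : Fin M => (k : ℕ) < m), μ k :=
  stmt_6_general hM hm2 A B hA Dstar hDstar hmin Hstar hH

end
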